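/- Let v ≥ 1 be an integer, let α ∈ ℝ^v with mean m(α) > 0, let γ be a real number with γ ≥ 1/(2·m(α)), and let m', l be real numbers satisfying 0 ≤ m' ≤ √(1 − 1/v)·m(α) and l ≥ F₁(α)² − m(α)². Then the relaxed objective function is an upper bound of the non-convex objective function, namely: (γ/v)·‖α + (1/(2γ))·𝟙‖² + (γ/v²)·‖α − S(α)·𝟙‖² − 1/(4γ) − γ·v·m'² + γ·v·l ≥ F₁(α) + γ·F₂(α). -/

import Mathlib

/-- Sum of the entries of `α ∈ ℝ^v`. -/
noncomputable def S (v : ℕ) (α : EuclideanSpace ℝ (Fin v)) : ℝ := ∑ i, α i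

/-- Mean of the entries of `α ∈ ℝ^v`. -/
noncomputable def m (v : ℕ) (α : EuclideanSpace ℝ (Fin v)) : ℝ := S v α / v

/-- Mean absolute value `F₁(α) = (1/v)·Σ |α_i|`. -/
noncomputable def F1 (v : ℕ) (α : EuclideanSpace ℝ (Fin v)) : ℝ := (∑ i, |α i|) / v

/-- Variance of absolute values `F₂(α) = (1/v)·Σ (|α_i| − F₁(α))²`. -/
noncomputable def F2 (v : ℕ) (α : EuclideanSpace ℝ (Fin v)) : ℝ :=
  (∑ i, (|α i| - F1 v α) ^ 2) / v

/-- The all-ones vector `𝟙 ∈ ℝ^v`. -/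
noncomputable def ones (v : ℕ) : EuclideanSpace ℝ (Fin v) :=
  (WithLp.equiv 2 (Fin v → ℝ)).symm (fun _ => 1)

/-!
Both norms are quadratics in `‖α‖²`, `S(α) = v·m(α)` and `v`, and `F₂(α) = ‖α‖²/v − F₁(α)²`.
After the bounds on `m'` and `l` are inserted, the gap between the two sides is
`γ‖α‖²/v² + γ·v·(F₁² − m²) + (γ(F₁² − m²) − (F₁ − m))`, and the last term is nonnegative because
`F₁ − m ≥ 0` and `γ(F₁ + m) ≥ 2γm ≥ 1`.
-/

open RealInnerProductSpace

@[simp]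
lemma ones_apply (v : ℕ) (i : Fin v) : ones v i = 1 := rfl

lemma inner_ones_right (v : ℕ) (α : EuclideanSpace ℝ (Fin v)) : ⟪α, ones v⟫ = S v α := by
  simp [PiLp.inner_apply, S]

lemma norm_ones_sq (v : ℕ) : ‖ones v‖ ^ 2 = v := by
  simp [EuclideanSpace.norm_sq_eq]

lemma norm_add_smul_ones_sq (v : ℕ) (α : EuclideanSpace ℝ (Fin v)) (c : ℝ) :
    ‖α + c • ones v‖ ^ 2 = ‖α‖ ^ 2 + 2 * c * S v α + c ^ 2 * v := by
  rw [norm_add_sq_real, inner_smul_right, inner_ones_right, norm_smul, mul_pow, norm_ones_sq,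
    Real.norm_eq_abs, sq_abs]
  ring

lemma F2_eq_sub_sq (v : ℕ) (α : EuclideanSpace ℝ (Fin v)) : F2 v α = ‖α‖ ^ 2 / v - F1 v α ^ 2 := by
  rcases Nat.eq_zero_or_pos v with rfl | hv
  · simp [F2, F1]
  have hsum : ∑ i, |α i| = v * F1 v α := by rw [F1]; field_simp
  rw [F2, EuclideanSpace.norm_sq_eq]
  simp only [sub_sq, Finset.sum_add_distrib, Finset.sum_sub_distrib, ← Finset.sum_mul,
    ← Finset.mul_sum, hsum, Finset.sum_const, Finset.card_univ, Fintype.card_fin, nsmul_eq_mul,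
    Real.norm_eq_abs]
  field_simp
  ring

lemma m_le_F1 (v : ℕ) (α : EuclideanSpace ℝ (Fin v)) : m v α ≤ F1 v α := by
  unfold m F1 S
  gcongr with i
  exact le_abs_self _

lemma sub_le_mul_sq_sub_sq {γ μ f : ℝ} (hγ : 0 ≤ γ) (hμf : μ ≤ f) (hγμ : 1 ≤ 2 * γ * μ) :
    f - μ ≤ γ * (f ^ 2 - μ ^ 2) := by
  nlinarith [mul_nonneg (sub_nonneg.2 hμf) (sub_nonneg.2 hγμ),
    mul_nonneg hγ (mul_nonneg (sub_nonneg.2 hμf) (sub_nonneg.2 hμf))]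

lemma sq_le_mul_sq_of_le_sqrt_mul {a x μ : ℝ} (ha : 0 ≤ a) (hx : 0 ≤ x)
    (h : x ≤ Real.sqrt a * μ) : x ^ 2 ≤ a * μ ^ 2 := by
  calc x ^ 2 ≤ (Real.sqrt a * μ) ^ 2 := pow_le_pow_left₀ hx h 2
    _ = a * μ ^ 2 := by rw [mul_pow, Real.sq_sqrt ha]

lemma relaxed_objective_upper_bound_of_moments {n γ Q μ f m' l : ℝ} (hn : 0 < n) (hγ : 0 < γ)
    (hQ : 0 ≤ Q) (hμf : μ ≤ f) (hγμ : 1 ≤ 2 * γ * μ) (hm' : m' ^ 2 ≤ (1 - 1 / n) * μ ^ 2)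
    (hl : f ^ 2 - μ ^ 2 ≤ l) :
    γ / n * (Q + 2 * (1 / (2 * γ)) * (n * μ) + (1 / (2 * γ)) ^ 2 * n)
      + γ / n ^ 2 * (Q + 2 * -(n * μ) * (n * μ) + (-(n * μ)) ^ 2 * n)
      - 1 / (4 * γ) - γ * n * m' ^ 2 + γ * n * l
    ≥ f + γ * (Q / n - f ^ 2) := by
  have hgap := sub_le_mul_sq_sub_sq hγ.le hμf hγμ
  have hsq : 0 ≤ f ^ 2 - μ ^ 2 := nonneg_of_mul_nonneg_right (hgap.trans' (sub_nonneg.2 hμf)) hγ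
  have hγn : 0 ≤ γ * n := by positivity
  have hdiff : γ / n * (Q + 2 * (1 / (2 * γ)) * (n * μ) + (1 / (2 * γ)) ^ 2 * n)
      + γ / n ^ 2 * (Q + 2 * -(n * μ) * (n * μ) + (-(n * μ)) ^ 2 * n)
      - 1 / (4 * γ) - γ * n * m' ^ 2 + γ * n * l - (f + γ * (Q / n - f ^ 2))
      = γ * Q / n ^ 2 + γ * n * ((1 - 1 / n) * μ ^ 2 - m' ^ 2) + γ * n * (l - (f ^ 2 - μ ^ 2))
        + γ * n * (f ^ 2 - μ ^ 2) + (γ * (f ^ 2 - μ ^ 2) - (f - μ)) := by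
    field_simp
    ring
  have hQ' : 0 ≤ γ * Q / n ^ 2 := by positivity
  linarith [mul_nonneg hγn (sub_nonneg.2 hm'), mul_nonneg hγn (sub_nonneg.2 hl),
    mul_nonneg hγn hsq]

/-- The relaxed objective function is an upper bound of the non-convex objective function. -/
theorem relaxed_objective_upper_bound
    (v : ℕ) (hv : 1 ≤ v) (α : EuclideanSpace ℝ (Fin v)) (γ m' l : ℝ)
    (hmean : 0 < m v α)
    (hγ : 1 / (2 * m v α) ≤ γ)
    (hm'0 : 0 ≤ m') (hm' : m' ≤ Real.sqrt (1 - 1 / v) * m v α)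
    (hl : F1 v α ^ 2 - m v α ^ 2 ≤ l) :
    γ / v * ‖α + (1 / (2 * γ)) • ones v‖ ^ 2
      + γ / v ^ 2 * ‖α - S v α • ones v‖ ^ 2
      - 1 / (4 * γ) - γ * v * m' ^ 2 + γ * v * l
    ≥ F1 v α + γ * F2 v α := by
  have hv0 : (0 : ℝ) < v := by exact_mod_cast hv
  have hγ0 : 0 < γ := lt_of_lt_of_le (by positivity) hγ
  have hγm : 1 ≤ 2 * γ * m v α := by
    rw [div_le_iff₀ (by positivity)] at hγ
    linarith
  have hS : S v α = v * m v α := by rw [m]; field_simp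
  have hfactor : 0 ≤ 1 - 1 / (v : ℝ) :=
    sub_nonneg.2 (div_le_one_of_le₀ (by exact_mod_cast hv) hv0.le)
  rw [sub_eq_add_neg _ (S v α • _), ← neg_smul, norm_add_smul_ones_sq, norm_add_smul_ones_sq,
    F2_eq_sub_sq, hS]
  exact relaxed_objective_upper_bound_of_moments hv0 hγ0 (by positivity) (m_le_F1 v α) hγm
    (sq_le_mul_sq_of_le_sqrt_mul hfactor hm'0 hm') hl
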